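/- arXiv:2604.25784 — 5 statements merged into one kernel-verified Lean document; each statement's English description precedes it below -/
import Mathlib

section
/- Let S and A be Polish spaces, F ⊆ S × A a Borel set such that for every (s,a) ∈ F there is an open neighborhood U of a with {s} × U ⊆ F, and μ a Borel probability measure on S × A with μ(F) > 0. Then there exist a Borel set E ⊆ S and an open set O ⊆ A with E × O ⊆ F up to a μ-null set and μ(E × O) > 0. -/
open MeasureTheory ProbabilityTheory

theorem stmt5 {S A : Type*} [TopologicalSpace S] [PolishSpace S]
    [MeasurableSpace S] [BorelSpace S]
    [TopologicalSpace A] [PolishSpace A] [MeasurableSpace A] [BorelSpace A]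
    (F : Set (S × A)) (hF : MeasurableSet F)
    (hsec : ∀ p ∈ F, ∃ U : Set A, IsOpen U ∧ p.2 ∈ U ∧ ∀ a ∈ U, (p.1, a) ∈ F)
    (μ : Measure (S × A)) [IsProbabilityMeasure μ] (hpos : 0 < μ F) :
    ∃ (E : Set S) (O : Set A), MeasurableSet E ∧ IsOpen O ∧
      μ ((E ×ˢ O) \ F) = 0 ∧ 0 < μ (E ×ˢ O) := by
  classical
  rcases isEmpty_or_nonempty A with hA | hA
  · exfalso
    have : F = ∅ := Set.eq_empty_of_isEmpty F
    rw [this] at hpos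
    simp at hpos
  set ν := μ.fst with hν
  set κ := μ.condKernel with hκ
  have hdis : ν ⊗ₘ κ = μ := μ.disintegrate μ.condKernel
  -- for an open set O, the "good" set of s
  set E : Set A → Set S := fun O => {s | κ s (Prod.mk s ⁻¹' ((Set.univ ×ˢ O) \ F)) = 0}
    with hE
  have hEmeas : ∀ O : Set A, IsOpen O → MeasurableSet (E O) := by
    intro O hO
    have hT : MeasurableSet ((Set.univ ×ˢ O) \ F) :=
      (MeasurableSet.univ.prod hO.measurableSet).diff hF
    have := ProbabilityTheory.Kernel.measurable_kernel_prodMk_left (κ := κ) hT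
    exact this (measurableSet_singleton 0)
  -- for O open, (E O ×ˢ O) \ F has measure 0
  have hnull : ∀ O : Set A, IsOpen O → μ ((E O ×ˢ O) \ F) = 0 := by
    intro O hO
    have hT : MeasurableSet ((E O ×ˢ O) \ F) :=
      ((hEmeas O hO).prod hO.measurableSet).diff hF
    rw [← hdis, Measure.compProd_apply hT]
    refine lintegral_eq_zero_iff ?_ |>.mpr ?_
    · exact ProbabilityTheory.Kernel.measurable_kernel_prodMk_left hT
    · refine Filter.Eventually.of_forall fun s => ?_
      by_cases hs : s ∈ E O
      · have hsub : Prod.mk s ⁻¹' ((E O ×ˢ O) \ F) ⊆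
            Prod.mk s ⁻¹' ((Set.univ ×ˢ O) \ F) := by
          intro a ha
          exact ⟨⟨trivial, ha.1.2⟩, ha.2⟩
        exact le_antisymm (le_trans (measure_mono hsub) (le_of_eq hs)) zero_le
      · have : Prod.mk s ⁻¹' ((E O ×ˢ O) \ F) = ∅ := by
          ext a
          simp only [Set.mem_preimage, Set.mem_diff, Set.mem_prod, Set.mem_empty_iff_false,
            iff_false]
          rintro ⟨⟨h1, _⟩, _⟩
          exact hs h1
        simp [this]
  -- F is covered by the sets E O ×ˢ O for O in a countable basis
  have hcover : F ⊆ ⋃ O : TopologicalSpace.countableBasis A, (E O ×ˢ (O : Set A)) := by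
    rintro ⟨s, a⟩ hsa
    obtain ⟨U, hUopen, haU, hUF⟩ := hsec _ hsa
    obtain ⟨O, hOB, haO, hOU⟩ :=
      (TopologicalSpace.isBasis_countableBasis A).exists_subset_of_mem_open haU hUopen
    refine Set.mem_iUnion.mpr ⟨⟨O, hOB⟩, ?_, haO⟩
    have : Prod.mk s ⁻¹' ((Set.univ ×ˢ O) \ F) = ∅ := by
      ext b
      simp only [Set.mem_preimage, Set.mem_diff, Set.mem_prod, Set.mem_empty_iff_false, iff_false]
      rintro ⟨⟨_, hb⟩, hbF⟩
      exact hbF (hUF b (hOU hb))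
    simp only [hE, Set.mem_setOf_eq]
    rw [this, measure_empty]
  -- some term in the countable cover has positive measure
  have hsum : μ F ≤ ∑' O : TopologicalSpace.countableBasis A, μ (E O ×ˢ (O : Set A)) :=
    le_trans (measure_mono hcover) (measure_iUnion_le _)
  have : ∃ O : TopologicalSpace.countableBasis A, 0 < μ (E O ×ˢ (O : Set A)) := by
    by_contra h
    push_neg at h
    have hz : ∀ O : TopologicalSpace.countableBasis A, μ (E O ×ˢ (O : Set A)) = 0 :=
      fun O => le_antisymm (h O) zero_le
    simp only [hz, tsum_zero] at hsum
    exact absurd (le_antisymm hsum zero_le) (ne_of_gt hpos)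
  obtain ⟨⟨O, hOB⟩, hOpos⟩ := this
  have hOopen : IsOpen O := TopologicalSpace.isOpen_of_mem_countableBasis hOB
  exact ⟨E O, O, hEmeas O hOopen, hOopen, hnull O hOopen, hOpos⟩
end

section
/- Let X, Y, Z be Polish spaces, ν a Borel probability measure on X, and h : X × Y → Z a Carathéodory function (measurable in the first variable, continuous in the second). Then for every ε > 0 there is a compact set K ⊆ X with ν(X \ K) < ε such that the restriction of h to K × Y is jointly continuous. -/
open MeasureTheory Metric Set Filter Topology

private lemma sd_tight {X : Type*} [TopologicalSpace X] [PolishSpace X]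
    [MeasurableSpace X] [BorelSpace X] (ν : Measure X) [IsFiniteMeasure ν]
    {δ : ENNReal} (hδ : δ ≠ 0) : ∃ K : Set X, IsCompact K ∧ ν Kᶜ < δ := by
  letI := TopologicalSpace.upgradeIsCompletelyMetrizable X
  rcases isEmpty_or_nonempty X with hX | hX
  · refine ⟨∅, isCompact_empty, ?_⟩
    have : (∅ : Set X)ᶜ = (∅ : Set X) := by
      simp [Set.compl_empty, Set.univ_eq_empty_iff.2 hX]
    rw [this, measure_empty]
    exact pos_iff_ne_zero.2 hδ
  obtain ⟨δ', δ'pos, hδ'⟩ := ENNReal.exists_pos_sum_of_countable' hδ ℕ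
  set u := TopologicalSpace.denseSeq X with hu_def
  have hu : DenseRange u := TopologicalSpace.denseRange_denseSeq X
  set V : ℕ → ℕ → Set X := fun m N => ⋃ n ∈ Finset.range N, closedBall (u n) (1/(m+1)) with hV
  have hVmeas : ∀ m N, MeasurableSet (V m N) := fun m N =>
    (Finset.range N).measurableSet_biUnion fun n _ => measurableSet_closedBall
  have key : ∀ m : ℕ, ∃ N : ℕ, ν (V m N)ᶜ ≤ δ' m := by
    intro m
    have hrpos : (0:ℝ) < 1/(m+1) := by positivity
    have hmono : Monotone (V m) := fun a b hab =>
      Set.biUnion_subset_biUnion_left (Finset.range_subset_range.2 hab)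
    have hUnion : ⋃ N, V m N = univ := by
      refine Set.eq_univ_iff_forall.2 fun x => ?_
      obtain ⟨n, hn⟩ := hu.exists_dist_lt x hrpos
      exact Set.mem_iUnion.2 ⟨n+1, Set.mem_biUnion (Finset.self_mem_range_succ n)
        (mem_closedBall.2 hn.le)⟩
    have htend : Tendsto (fun N => ν (V m N)) atTop (𝓝 (ν univ)) := by
      have := tendsto_measure_iUnion_atTop (μ := ν) hmono
      rw [hUnion] at this
      exact this
    rcases le_or_gt (ν univ) (δ' m) with hle | hlt
    · exact ⟨0, le_trans (measure_mono (Set.subset_univ _)) hle⟩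
    · have hsub : ν univ - δ' m < ν univ :=
        ENNReal.sub_lt_self (measure_ne_top ν _) ((δ'pos m).trans hlt).ne' (δ'pos m).ne'
      obtain ⟨N, hN⟩ := (htend.eventually (eventually_gt_nhds hsub)).exists
      refine ⟨N, ?_⟩
      rw [measure_compl (hVmeas m N) (measure_ne_top ν _)]
      exact tsub_le_iff_right.2 (tsub_le_iff_left.1 hN.le)
  choose N hN using key
  refine ⟨⋂ m, V m (N m), ?_, ?_⟩
  · have hclosed : IsClosed (⋂ m, V m (N m)) :=
      isClosed_iInter fun m => (Finset.range (N m)).finite_toSet.isClosed_biUnion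
        fun n _ => isClosed_closedBall
    refine TotallyBounded.isCompact_of_isClosed (Metric.totallyBounded_iff.2 ?_) hclosed
    intro ε hε
    obtain ⟨m, hm⟩ := exists_nat_one_div_lt hε
    refine ⟨u '' ↑(Finset.range (N m)), ((Finset.range (N m)).finite_toSet).image u, ?_⟩
    intro x hx
    have := Set.mem_iInter.1 hx m
    obtain ⟨n, hn, hxn⟩ := Set.mem_iUnion₂.1 this
    exact Set.mem_biUnion (Set.mem_image_of_mem u hn)
      (mem_ball.2 (lt_of_le_of_lt (mem_closedBall.1 hxn) hm))
  · have : (⋂ m, V m (N m))ᶜ = ⋃ m, (V m (N m))ᶜ := by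
      simp [Set.compl_iInter]
    rw [this]
    calc ν (⋃ m, (V m (N m))ᶜ) ≤ ∑' m, ν (V m (N m))ᶜ := measure_iUnion_le _
      _ ≤ ∑' m, δ' m := ENNReal.tsum_le_tsum hN
      _ < δ := hδ'

private lemma sd_open {X : Type*} [TopologicalSpace X] [PolishSpace X]
    [MeasurableSpace X] [BorelSpace X] (ν : Measure X) [IsFiniteMeasure ν]
    {ι : Type*} [Countable ι] (S : ι → Set X) (hS : ∀ i, MeasurableSet (S i))
    {δ : ENNReal} (hδ : δ ≠ 0) :
    ∃ K : Set X, IsCompact K ∧ ν Kᶜ < δ ∧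
      ∀ i, ∃ U : Set X, IsOpen U ∧ S i ∩ K = U ∩ K := by
  letI := TopologicalSpace.upgradeIsCompletelyMetrizable X
  set δ' := min δ 1 with hδ'_def
  have hδ'0 : δ' ≠ 0 := (lt_min (pos_iff_ne_zero.2 hδ) zero_lt_one).ne'
  have hδ'2 : δ' / 2 ≠ 0 := (ENNReal.half_pos hδ'0).ne'
  obtain ⟨K0, hK0c, hK0m⟩ := sd_tight ν (δ := δ'/2) hδ'2
  obtain ⟨ε', ε'pos, hε'⟩ := ENNReal.exists_pos_sum_of_countable' hδ'2 ι
  have hhalf : ∀ i, (ε' i) / 2 ≠ 0 := fun i => (ENNReal.half_pos (ε'pos i).ne').ne'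
  choose F hFsub hFcl hFm using fun i =>
    (hS i).exists_isClosed_diff_lt (measure_ne_top ν _) (hhalf i)
  choose F' hF'sub hF'cl hF'm using fun i =>
    (hS i).compl.exists_isClosed_diff_lt (measure_ne_top ν _) (hhalf i)
  set K := K0 ∩ ⋂ i, (F i ∪ F' i) with hK
  have hKcl : IsClosed (⋂ i, (F i ∪ F' i)) :=
    isClosed_iInter fun i => (hFcl i).union (hF'cl i)
  refine ⟨K, hK0c.inter_right hKcl, ?_, ?_⟩
  · have hsub : Kᶜ ⊆ K0ᶜ ∪ ⋃ i, (F i ∪ F' i)ᶜ := by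
      intro x hx
      rw [hK, Set.compl_inter] at hx
      rcases hx with hx | hx
      · exact Or.inl hx
      · rw [Set.compl_iInter] at hx
        exact Or.inr hx
    calc ν Kᶜ ≤ ν (K0ᶜ ∪ ⋃ i, (F i ∪ F' i)ᶜ) := measure_mono hsub
      _ ≤ ν K0ᶜ + ν (⋃ i, (F i ∪ F' i)ᶜ) := measure_union_le _ _
      _ ≤ ν K0ᶜ + ∑' i, ν (F i ∪ F' i)ᶜ := by gcongr; exact measure_iUnion_le _
      _ ≤ ν K0ᶜ + ∑' i, ε' i := by
          gcongr with i
          have hsub2 : (F i ∪ F' i)ᶜ ⊆ (S i \ F i) ∪ ((S i)ᶜ \ F' i) := by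
            intro x hx
            rw [Set.mem_compl_iff, Set.mem_union, not_or] at hx
            by_cases hxS : x ∈ S i
            · exact Or.inl ⟨hxS, hx.1⟩
            · exact Or.inr ⟨hxS, hx.2⟩
          calc ν (F i ∪ F' i)ᶜ ≤ ν ((S i \ F i) ∪ ((S i)ᶜ \ F' i)) := measure_mono hsub2
            _ ≤ ν (S i \ F i) + ν ((S i)ᶜ \ F' i) := measure_union_le _ _
            _ ≤ ε' i / 2 + ε' i / 2 := add_le_add (hFm i).le (hF'm i).le
            _ = ε' i := ENNReal.add_halves _
      _ < δ'/2 + δ'/2 := ENNReal.add_lt_add hK0m hε'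
      _ = δ' := ENNReal.add_halves _
      _ ≤ δ := min_le_left _ _
  · intro i
    refine ⟨(F' i)ᶜ, (hF'cl i).isOpen_compl, ?_⟩
    ext x
    constructor
    · rintro ⟨hxS, hxK⟩
      exact ⟨fun hxF' => (hF'sub i hxF') hxS, hxK⟩
    · rintro ⟨hxF', hxK⟩
      have hx2 : x ∈ F i ∪ F' i := Set.mem_iInter.1 hxK.2 i
      rcases hx2 with hx2 | hx2
      · exact ⟨hFsub i hx2, hxK⟩
      · exact absurd hx2 hxF'

theorem stmt10 {X Y Z : Type*} [TopologicalSpace X] [PolishSpace X]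
    [MeasurableSpace X] [BorelSpace X]
    [TopologicalSpace Y] [PolishSpace Y] [MeasurableSpace Y] [BorelSpace Y]
    [TopologicalSpace Z] [PolishSpace Z] [MeasurableSpace Z] [BorelSpace Z]
    (ν : Measure X) [IsProbabilityMeasure ν]
    (h : X × Y → Z)
    (hmeas : ∀ y, Measurable fun x => h (x, y))
    (hcont : ∀ x, Continuous fun y => h (x, y))
    (ε : ENNReal) (hε : 0 < ε) :
    ∃ K : Set X, IsCompact K ∧ ν Kᶜ < ε ∧
      ContinuousOn h (K ×ˢ (Set.univ : Set Y)) := by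
  letI := TopologicalSpace.upgradeIsCompletelyMetrizable Y
  letI := TopologicalSpace.upgradeIsCompletelyMetrizable Z
  rcases isEmpty_or_nonempty Y with hY | hY
  · obtain ⟨K, hKc, hKm⟩ := sd_tight ν hε.ne'
    refine ⟨K, hKc, hKm, ?_⟩
    rw [Set.eq_empty_of_isEmpty (K ×ˢ (Set.univ : Set Y))]
    exact continuousOn_empty h
  set u := TopologicalSpace.denseSeq Y with hu_def
  have hu : DenseRange u := TopologicalSpace.denseRange_denseSeq Y
  set r : ℕ → ℝ := fun k => 1/(k+1) with hr_def
  have rpos : ∀ k : ℕ, (0:ℝ) < r k := fun k => by positivity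
  set A : ℕ → ℕ → ℕ → Set X := fun i k n =>
    ⋂ (p : ℕ), ⋂ (q : ℕ), {x | u p ∈ ball (u i) (r k) → u q ∈ ball (u i) (r k) →
      dist (h (x, u p)) (h (x, u q)) ≤ r n} with hA_def
  have hAmem : ∀ x i k n, x ∈ A i k n ↔ ∀ p q : ℕ, u p ∈ ball (u i) (r k) →
      u q ∈ ball (u i) (r k) → dist (h (x, u p)) (h (x, u q)) ≤ r n := by
    intro x i k n
    simp only [hA_def, Set.mem_iInter, Set.mem_setOf_eq]
  have hAmeas : ∀ i k n, MeasurableSet (A i k n) := by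
    intro i k n
    refine MeasurableSet.iInter fun p => MeasurableSet.iInter fun q => ?_
    by_cases hp : u p ∈ ball (u i) (r k) <;> by_cases hq : u q ∈ ball (u i) (r k) <;>
      simp only [hp, hq, forall_true_left, true_implies, false_implies,
        Set.setOf_true, MeasurableSet.univ]
    exact measurableSet_le ((hmeas (u p)).dist (hmeas (u q))) measurable_const
  -- oscillation extends from the dense sequence to the whole ball
  have osc : ∀ (x : X) (i k n : ℕ), x ∈ A i k n → ∀ y y', y ∈ ball (u i) (r k) →
      y' ∈ ball (u i) (r k) → dist (h (x, y)) (h (x, y')) ≤ r n := by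
    intro x i k n hx y y' hy hy'
    have hxpq := (hAmem x i k n).1 hx
    refine le_of_forall_pos_le_add fun ε0 hε0 => ?_
    obtain ⟨δ1, δ1pos, hδ1⟩ := Metric.continuous_iff.1 (hcont x) y (ε0/2) (by positivity)
    obtain ⟨δ2, δ2pos, hδ2⟩ := Metric.continuous_iff.1 (hcont x) y' (ε0/2) (by positivity)
    obtain ⟨p, hp⟩ := hu.exists_dist_lt y (lt_min δ1pos (sub_pos.2 (mem_ball.1 hy)))
    obtain ⟨q, hq⟩ := hu.exists_dist_lt y' (lt_min δ2pos (sub_pos.2 (mem_ball.1 hy')))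
    have hpball : u p ∈ ball (u i) (r k) := by
      rw [mem_ball]
      calc dist (u p) (u i) ≤ dist (u p) y + dist y (u i) := dist_triangle _ _ _
        _ < (r k - dist y (u i)) + dist y (u i) := by
            have := lt_of_lt_of_le hp (min_le_right _ _)
            rw [dist_comm] at this
            linarith
        _ = r k := by ring
    have hqball : u q ∈ ball (u i) (r k) := by
      rw [mem_ball]
      calc dist (u q) (u i) ≤ dist (u q) y' + dist y' (u i) := dist_triangle _ _ _
        _ < (r k - dist y' (u i)) + dist y' (u i) := by
            have := lt_of_lt_of_le hq (min_le_right _ _)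
            rw [dist_comm] at this
            linarith
        _ = r k := by ring
    have h1 : dist (h (x, u p)) (h (x, y)) < ε0/2 := by
      have := hδ1 (u p) (by rw [dist_comm]; exact lt_of_lt_of_le hp (min_le_left _ _))
      exact this
    have h2 : dist (h (x, u q)) (h (x, y')) < ε0/2 := by
      have := hδ2 (u q) (by rw [dist_comm]; exact lt_of_lt_of_le hq (min_le_left _ _))
      exact this
    have h3 : dist (h (x, u p)) (h (x, u q)) ≤ r n := hxpq p q hpball hqball
    calc dist (h (x, y)) (h (x, y')) ≤
        dist (h (x, y)) (h (x, u p)) + dist (h (x, u p)) (h (x, u q))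
          + dist (h (x, u q)) (h (x, y')) := dist_triangle4 _ _ _ _
      _ ≤ ε0/2 + r n + ε0/2 := by
          rw [dist_comm (h (x, y)) (h (x, u p))]
          linarith
      _ = r n + ε0 := by ring
  -- every point is covered by some ball on which the x-slice oscillates little
  have cover : ∀ (x : X) (y : Y) (n : ℕ), ∃ i k : ℕ,
      y ∈ ball (u i) (r k) ∧ x ∈ A i k n := by
    intro x y n
    obtain ⟨δ1, δ1pos, hδ1⟩ := Metric.continuous_iff.1 (hcont x) y (r n / 2)
      (by have := rpos n; positivity)
    obtain ⟨k, hk⟩ := exists_nat_one_div_lt (show (0:ℝ) < δ1/2 by positivity)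
    have hrk : r k < δ1/2 := hk
    obtain ⟨i, hi⟩ := hu.exists_dist_lt y (rpos k)
    refine ⟨i, k, mem_ball.2 hi, (hAmem x i k n).2 fun p q hp hq => ?_⟩
    have hclose : ∀ m : ℕ, u m ∈ ball (u i) (r k) →
        dist (h (x, u m)) (h (x, y)) < r n / 2 := by
      intro m hm
      refine hδ1 (u m) ?_
      calc dist (u m) y ≤ dist (u m) (u i) + dist (u i) y := dist_triangle _ _ _
        _ < r k + r k := by
            have h1 := mem_ball.1 hm
            have h2 : dist (u i) y < r k := by rw [dist_comm]; exact hi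
            linarith
        _ < δ1 := by linarith
    have hp' := hclose p hp
    have hq' := hclose q hq
    calc dist (h (x, u p)) (h (x, u q)) ≤
        dist (h (x, u p)) (h (x, y)) + dist (h (x, u q)) (h (x, y)) :=
          dist_triangle_right _ _ _
      _ ≤ r n := by linarith
  -- countable basis of Z
  obtain ⟨bZ, bZct, -, bZbasis⟩ := TopologicalSpace.exists_countable_basis Z
  haveI := bZct.to_subtype
  set S : (ℕ × ℕ × ℕ) ⊕ (ℕ × bZ) → Set X :=
    Sum.elim (fun t => A t.1 t.2.1 t.2.2)
      (fun t => (fun x => h (x, u t.1)) ⁻¹' (t.2 : Set Z)) with hS_def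
  have hSmeas : ∀ j, MeasurableSet (S j) := by
    rintro (⟨i, k, n⟩ | ⟨i, V⟩)
    · exact hAmeas i k n
    · exact (hmeas (u i)) (bZbasis.isOpen V.2).measurableSet
  obtain ⟨K, hKc, hKm, hKU⟩ := sd_open ν S hSmeas hε.ne'
  refine ⟨K, hKc, hKm, ?_⟩
  rintro ⟨x0, y0⟩ hx0
  have hx0K : x0 ∈ K := hx0.1
  refine Metric.tendsto_nhds.2 fun ε' hε' => ?_
  obtain ⟨n, hn⟩ := exists_nat_one_div_lt (show (0:ℝ) < ε'/3 by positivity)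
  have hrn : r n < ε'/3 := hn
  obtain ⟨i, k, hy0, hx0A⟩ := cover x0 y0 n
  obtain ⟨U1, hU1o, hU1⟩ := hKU (Sum.inl (i, k, n))
  have hx0U1 : x0 ∈ U1 := by
    have hmem : x0 ∈ S (Sum.inl (i, k, n)) ∩ K := ⟨hx0A, hx0K⟩
    rw [hU1] at hmem
    exact hmem.1
  have hui : u i ∈ ball (u i) (r k) := mem_ball_self (rpos k)
  have hanchor : dist (h (x0, u i)) (h (x0, y0)) ≤ r n :=
    osc x0 i k n hx0A (u i) y0 hui hy0
  obtain ⟨V, hVb, hVm, hVsub⟩ := bZbasis.exists_subset_of_mem_open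
    (mem_ball_self (rpos n) : h (x0, u i) ∈ ball (h (x0, u i)) (r n)) isOpen_ball
  obtain ⟨U2, hU2o, hU2⟩ := hKU (Sum.inr (i, ⟨V, hVb⟩))
  have hx0U2 : x0 ∈ U2 := by
    have hmem : x0 ∈ S (Sum.inr (i, ⟨V, hVb⟩)) ∩ K := ⟨hVm, hx0K⟩
    rw [hU2] at hmem
    exact hmem.1
  have hW : (U1 ∩ U2) ×ˢ ball (u i) (r k) ∈ 𝓝 (x0, y0) :=
    ((hU1o.inter hU2o).prod isOpen_ball).mem_nhds ⟨⟨hx0U1, hx0U2⟩, hy0⟩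
  filter_upwards [mem_nhdsWithin_of_mem_nhds hW, self_mem_nhdsWithin] with p hpW hpK
  obtain ⟨x, y⟩ := p
  have hxK : x ∈ K := hpK.1
  have hxA : x ∈ A i k n := by
    have hmem : x ∈ U1 ∩ K := ⟨hpW.1.1, hxK⟩
    rw [← hU1] at hmem
    exact hmem.1
  have hxV : h (x, u i) ∈ V := by
    have hmem : x ∈ U2 ∩ K := ⟨hpW.1.2, hxK⟩
    rw [← hU2] at hmem
    exact hmem.1
  have d1 : dist (h (x, y)) (h (x, u i)) ≤ r n :=
    osc x i k n hxA y (u i) hpW.2 hui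
  have d2 : dist (h (x, u i)) (h (x0, u i)) < r n := mem_ball.1 (hVsub hxV)
  calc dist (h (x, y)) (h (x0, y0)) ≤
      dist (h (x, y)) (h (x, u i)) + dist (h (x, u i)) (h (x0, u i))
        + dist (h (x0, u i)) (h (x0, y0)) := dist_triangle4 _ _ _ _
    _ < ε' := by linarith
end

section
/- Let X, Y be Polish spaces, ν a Borel probability measure on X, and h : X × Y → ℝ a Carathéodory function such that |h(x,y)| ≤ f(x) for all (x,y), where f : X → ℝ is nonnegative and ν-integrable. If ⟨μ_n⟩ is a sequence of Borel probability measures on X × Y, each with X-marginal equal to ν, converging weakly to μ (which then also has X-marginal ν), then ∫ h dμ_n → ∫ h dμ. -/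
/-!
Truncating `h` at height `M` changes `∫ h dθ` by at most `∫ (f - M)⁺ dν` for every `θ` with
`X`-marginal `ν`, so one may assume `|h| ≤ M`. The `Y`-marginals converge weakly, hence are
uniformly tight, and only a compact `K ⊆ Y` matters. On `K`, a partition of unity `(φ_c)`
subordinate to `r`-balls replaces `h` by `∑ h (x, c) φ_c(y)` at a cost bounded by the modulus of
continuity `ω_r(x)` of `h (x, ·)` on `K`, whose `ν`-integral tends to `0` by dominated convergence.
For a product `g(x) φ(y)` with `g ∈ L¹(ν)`, approximating `g` in `L¹(ν)` by a bounded continuous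
function reduces the claim to weak convergence, again because the error only sees the
`X`-marginal.
-/

open MeasureTheory Filter Topology Set
open scoped ENNReal BoundedContinuousFunction

theorem tendsto_of_forall_dist_le {ι E : Type*} [PseudoMetricSpace E] {l : Filter ι}
    {A : ι → E} {B : E}
    (H : ∀ ε > 0, ∃ (a : ι → E) (b : E), Tendsto a l (𝓝 b) ∧ (∀ i, dist (A i) (a i) ≤ ε) ∧
      dist B b ≤ ε) :
    Tendsto A l (𝓝 B) := by
  refine Metric.tendsto_nhds.2 fun ε hε => ?_
  obtain ⟨a, b, hab, hAa, hBb⟩ := H (ε / 3) (by positivity)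
  filter_upwards [Metric.tendsto_nhds.1 hab (ε / 3) (by positivity)] with i hi
  calc dist (A i) B ≤ dist (A i) (a i) + dist (a i) b + dist b B := dist_triangle4 _ _ _ _
    _ < ε := by linarith [hAa i, dist_comm B b]

theorem measurable_prod_of_measurable_of_continuous {X Y β : Type*} [MeasurableSpace X]
    [TopologicalSpace Y] [TopologicalSpace.MetrizableSpace Y] [SecondCountableTopology Y]
    [MeasurableSpace Y] [OpensMeasurableSpace Y]
    [TopologicalSpace β] [TopologicalSpace.PseudoMetrizableSpace β] [MeasurableSpace β]
    [BorelSpace β] {h : X × Y → β} (hmeas : ∀ y, Measurable fun x => h (x, y))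
    (hcont : ∀ x, Continuous fun y => h (x, y)) : Measurable h :=
  (measurable_uncurry_of_continuous_of_measurable (u := fun y x => h (x, y)) hcont hmeas).comp
    measurable_swap

theorem measurable_iSup_of_continuous {X P : Type*} [MeasurableSpace X] [TopologicalSpace P]
    [TopologicalSpace.SeparableSpace P] {F : X → P → ℝ} (hmeas : ∀ p, Measurable fun x => F x p)
    (hcont : ∀ x, Continuous (F x)) : Measurable fun x => ⨆ p, F x p := by
  obtain ⟨D, hDc, hD⟩ := TopologicalSpace.exists_countable_dense P
  have := hDc.to_subtype
  simp_rw [← hD.ciSup' (hcont _)]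
  exact .iSup fun p => hmeas p

theorem abs_integral_sub_le_integral {Z : Type*} [MeasurableSpace Z] {θ : Measure Z}
    {h q e : Z → ℝ} (hh : Integrable h θ) (hq : Integrable q θ) (he : Integrable e θ)
    (hle : ∀ z, |h z - q z| ≤ e z) :
    |∫ z, h z ∂θ - ∫ z, q z ∂θ| ≤ ∫ z, e z ∂θ := by
  rw [← integral_sub hh hq]
  exact norm_integral_le_of_norm_le (f := fun z => h z - q z) he (ae_of_all _ hle)

section Marginal

variable {X Y : Type*} [MeasurableSpace X] [MeasurableSpace Y] {θ : Measure (X × Y)}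
  {ν : Measure X} {g : X → ℝ}

theorem integral_comp_fst_of_map_fst_eq (hθ : θ.map Prod.fst = ν)
    (hg : AEStronglyMeasurable g ν) : ∫ z, g z.1 ∂θ = ∫ x, g x ∂ν := by
  subst hθ
  exact (integral_map measurable_fst.aemeasurable hg).symm

theorem MeasureTheory.Integrable.comp_fst_of_map_fst_eq (hθ : θ.map Prod.fst = ν)
    (hg : Integrable g ν) : Integrable (fun z => g z.1) θ := by
  subst hθ
  exact hg.comp_measurable measurable_fst

theorem MeasureTheory.Integrable.comp_fst_mul_of_map_fst_eq [TopologicalSpace Y]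
    [OpensMeasurableSpace Y] (hθ : θ.map Prod.fst = ν) (hg : Integrable g ν) (φ : Y →ᵇ ℝ) :
    Integrable (fun z => g z.1 * φ z.2) θ :=
  (hg.comp_fst_of_map_fst_eq hθ).mul_bdd
    (φ.continuous.measurable.comp measurable_snd).aestronglyMeasurable
    (ae_of_all _ fun z => φ.norm_coe_le_norm z.2)

theorem abs_integral_sub_le_of_map_fst_eq [IsFiniteMeasure θ] (hθ : θ.map Prod.fst = ν)
    {h q : X × Y → ℝ} (hh : Integrable h θ) (hq : Integrable q θ) {ω : X → ℝ}
    (hω : Integrable ω ν) {S : Set Y} (hS : MeasurableSet S) {C : ℝ}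
    (hle : ∀ x y, |h (x, y) - q (x, y)| ≤ ω x + S.indicator (fun _ => C) y) :
    |∫ z, h z ∂θ - ∫ z, q z ∂θ| ≤ ∫ x, ω x ∂ν + θ.real (Prod.snd ⁻¹' S) * C := by
  have hS' : MeasurableSet (Prod.snd ⁻¹' S : Set (X × Y)) := measurable_snd hS
  have hωθ := hω.comp_fst_of_map_fst_eq hθ
  have hind : Integrable ((Prod.snd ⁻¹' S).indicator fun _ => C) θ :=
    (integrable_const C).indicator hS'
  calc _ ≤ ∫ z, (ω z.1 + (Prod.snd ⁻¹' S).indicator (fun _ => C) z) ∂θ :=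
        abs_integral_sub_le_integral hh hq (hωθ.add hind) fun z => hle z.1 z.2
    _ = _ := by
        rw [integral_add hωθ hind, integral_comp_fst_of_map_fst_eq hθ hω.1,
          integral_indicator_const _ hS', smul_eq_mul]

end Marginal

theorem tendsto_integral_mul_of_map_fst_eq {X Y ι : Type*} [TopologicalSpace X] [NormalSpace X]
    [MeasurableSpace X] [BorelSpace X] [TopologicalSpace Y] [MeasurableSpace Y]
    [OpensMeasurableSpace Y] {ν : Measure X} [ν.WeaklyRegular]
    {l : Filter ι} {μ : ι → Measure (X × Y)} {μlim : Measure (X × Y)}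
    (hmarg : ∀ i, (μ i).map Prod.fst = ν) (hmarglim : μlim.map Prod.fst = ν)
    (hweak : ∀ g : (X × Y) →ᵇ ℝ, Tendsto (fun i => ∫ z, g z ∂μ i) l (𝓝 (∫ z, g z ∂μlim)))
    {g : X → ℝ} (hg : Integrable g ν) (φ : Y →ᵇ ℝ) :
    Tendsto (fun i => ∫ z, g z.1 * φ z.2 ∂μ i) l (𝓝 (∫ z, g z.1 * φ z.2 ∂μlim)) := by
  refine tendsto_of_forall_dist_le fun ε hε => ?_
  obtain ⟨g', hg'ε, hg'⟩ :=
    hg.exists_boundedContinuous_integral_sub_le (ε := ε / (‖φ‖ + 1)) (by positivity)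
  let G : (X × Y) →ᵇ ℝ :=
    g'.compContinuous ⟨Prod.fst, continuous_fst⟩ * φ.compContinuous ⟨Prod.snd, continuous_snd⟩
  have key : ∀ θ : Measure (X × Y), θ.map Prod.fst = ν →
      dist (∫ z, g z.1 * φ z.2 ∂θ) (∫ z, G z ∂θ) ≤ ε := by
    intro θ hθ
    have hdiff : Integrable (fun x => |g x - g' x|) ν := (hg.sub hg').abs
    calc dist _ _ ≤ ∫ z, |g z.1 - g' z.1| * ‖φ‖ ∂θ := by
          refine abs_integral_sub_le_integral
            (hg.comp_fst_mul_of_map_fst_eq hθ φ) (hg'.comp_fst_mul_of_map_fst_eq hθ φ)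
            ((hdiff.comp_fst_of_map_fst_eq hθ).mul_const _) fun z => ?_
          change |g z.1 * φ z.2 - g' z.1 * φ z.2| ≤ _
          rw [← sub_mul, abs_mul]
          exact mul_le_mul_of_nonneg_left (φ.norm_coe_le_norm z.2) (abs_nonneg _)
      _ = (∫ x, |g x - g' x| ∂ν) * ‖φ‖ := by
          rw [integral_mul_const, integral_comp_fst_of_map_fst_eq hθ hdiff.1]
      _ ≤ ε / (‖φ‖ + 1) * ‖φ‖ := by gcongr; simpa [Real.norm_eq_abs] using hg'ε
      _ ≤ ε := by
          rw [div_mul_eq_mul_div, div_le_iff₀ (by positivity)]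
          nlinarith [norm_nonneg φ]
  exact ⟨_, _, hweak G, fun i => key (μ i) (hmarg i), key μlim hmarglim⟩

theorem tendsto_integral_sum_mul_of_map_fst_eq {X Y ι κ : Type*} [TopologicalSpace X]
    [NormalSpace X] [MeasurableSpace X] [BorelSpace X] [TopologicalSpace Y] [MeasurableSpace Y]
    [OpensMeasurableSpace Y] {ν : Measure X} [ν.WeaklyRegular]
    {l : Filter ι} {μ : ι → Measure (X × Y)} {μlim : Measure (X × Y)}
    (hmarg : ∀ i, (μ i).map Prod.fst = ν) (hmarglim : μlim.map Prod.fst = ν)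
    (hweak : ∀ g : (X × Y) →ᵇ ℝ, Tendsto (fun i => ∫ z, g z ∂μ i) l (𝓝 (∫ z, g z ∂μlim)))
    [Fintype κ] {g : κ → X → ℝ} (hg : ∀ c, Integrable (g c) ν) (φ : κ → Y →ᵇ ℝ) :
    Tendsto (fun i => ∫ z, ∑ c, g c z.1 * φ c z.2 ∂μ i) l
      (𝓝 (∫ z, ∑ c, g c z.1 * φ c z.2 ∂μlim)) := by
  simp only [integral_finsetSum _ fun c _ => (hg c).comp_fst_mul_of_map_fst_eq (hmarg _) (φ c),
    integral_finsetSum _ fun c _ => (hg c).comp_fst_mul_of_map_fst_eq hmarglim (φ c)]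
  exact tendsto_finsetSum _ fun c _ =>
    tendsto_integral_mul_of_map_fst_eq hmarg hmarglim hweak (hg c) (φ c)

section Modulus

variable {X Y : Type*} [PseudoMetricSpace Y] {h : X × Y → ℝ} {K : Set Y} {r : ℝ} {x : X}

noncomputable def continuityModulus (h : X × Y → ℝ) (K : Set Y) (r : ℝ) (x : X) : ℝ :=
  ⨆ p : {p : Y × Y // p.1 ∈ K ∧ p.2 ∈ K ∧ dist p.1 p.2 < r}, |h (x, p.1.1) - h (x, p.1.2)|

theorem continuityModulus_nonneg : 0 ≤ continuityModulus h K r x :=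
  Real.iSup_nonneg fun _ => abs_nonneg _

theorem continuityModulus_le {e : ℝ} (he : 0 ≤ e)
    (H : ∀ y ∈ K, ∀ y' ∈ K, dist y y' < r → |h (x, y) - h (x, y')| ≤ e) :
    continuityModulus h K r x ≤ e :=
  Real.iSup_le (fun p => H _ p.2.1 _ p.2.2.1 p.2.2.2) he

theorem abs_sub_le_continuityModulus {M : ℝ} (hM : ∀ z, |h z| ≤ M) {y y' : Y} (hy : y ∈ K)
    (hy' : y' ∈ K) (hd : dist y y' < r) :
    |h (x, y) - h (x, y')| ≤ continuityModulus h K r x := by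
  refine le_ciSup (f := fun p : {p : Y × Y // p.1 ∈ K ∧ p.2 ∈ K ∧ dist p.1 p.2 < r} =>
    |h (x, p.1.1) - h (x, p.1.2)|) ⟨2 * M, ?_⟩ ⟨(y, y'), hy, hy', hd⟩
  rintro _ ⟨p, rfl⟩
  exact (abs_sub _ _).trans (by linarith [hM (x, p.1.1), hM (x, p.1.2)])

theorem norm_continuityModulus_le {M : ℝ} (hM0 : 0 ≤ M) (hM : ∀ z, |h z| ≤ M) :
    ‖continuityModulus h K r x‖ ≤ 2 * M := by
  rw [Real.norm_eq_abs, abs_of_nonneg continuityModulus_nonneg]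
  exact continuityModulus_le (by positivity) fun y _ y' _ _ =>
    (abs_sub _ _).trans (by linarith [hM (x, y), hM (x, y')])

theorem measurable_continuityModulus [MeasurableSpace X] [SecondCountableTopology Y]
    (hmeas : ∀ y, Measurable fun x => h (x, y)) (hcont : ∀ x, Continuous fun y => h (x, y)) :
    Measurable (continuityModulus h K r) :=
  measurable_iSup_of_continuous (fun _ => ((hmeas _).sub (hmeas _)).abs) fun x =>
    (((hcont x).comp (continuous_fst.comp continuous_subtype_val)).sub
      ((hcont x).comp (continuous_snd.comp continuous_subtype_val))).abs

theorem integrable_continuityModulus [MeasurableSpace X] [SecondCountableTopology Y]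
    {ν : Measure X} [IsFiniteMeasure ν] {M : ℝ} (hM0 : 0 ≤ M) (hM : ∀ z, |h z| ≤ M)
    (hmeas : ∀ y, Measurable fun x => h (x, y)) (hcont : ∀ x, Continuous fun y => h (x, y)) :
    Integrable (continuityModulus h K r) ν :=
  .of_bound (measurable_continuityModulus hmeas hcont).aestronglyMeasurable (2 * M)
    (ae_of_all _ fun _ => norm_continuityModulus_le hM0 hM)

theorem tendsto_continuityModulus (hK : IsCompact K) (hcont : Continuous fun y => h (x, y)) :
    Tendsto (fun r => continuityModulus h K r x) (𝓝[>] 0) (𝓝 0) := by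
  refine Metric.tendsto_nhdsWithin_nhds.2 fun ε hε => ?_
  obtain ⟨δ, hδ, hunif⟩ := Metric.uniformContinuousOn_iff.1
    (hK.uniformContinuousOn_of_continuous hcont.continuousOn) (ε / 2) (by positivity)
  refine ⟨δ, hδ, fun r hr hrδ => ?_⟩
  have hrδ : r < δ := by simpa [abs_of_pos (mem_Ioi.1 hr)] using hrδ
  have hle : continuityModulus h K r x ≤ ε / 2 :=
    continuityModulus_le (by positivity) fun y hy y' hy' hd => (hunif y hy y' hy' (hd.trans hrδ)).le
  rw [Real.dist_eq, sub_zero, abs_of_nonneg continuityModulus_nonneg]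
  linarith

theorem tendsto_integral_continuityModulus [MeasurableSpace X] [SecondCountableTopology Y]
    {ν : Measure X} [IsFiniteMeasure ν] {M : ℝ} (hM0 : 0 ≤ M) (hM : ∀ z, |h z| ≤ M)
    (hK : IsCompact K) (hmeas : ∀ y, Measurable fun x => h (x, y))
    (hcont : ∀ x, Continuous fun y => h (x, y)) :
    Tendsto (fun r => ∫ x, continuityModulus h K r x ∂ν) (𝓝[>] 0) (𝓝 0) := by
  simpa using tendsto_integral_filter_of_dominated_convergence (fun _ => 2 * M)
    (Eventually.of_forall fun r => (measurable_continuityModulus hmeas hcont).aestronglyMeasurable)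
    (Eventually.of_forall fun r => ae_of_all _ fun x => norm_continuityModulus_le hM0 hM)
    (integrable_const _)
    (ae_of_all _ fun x => tendsto_continuityModulus hK (hcont x))

end Modulus

namespace PartitionOfUnity

variable {ι Y : Type*} [Fintype ι] [TopologicalSpace Y] {s : Set Y} (ρ : PartitionOfUnity ι Y s)
  {a : ι → ℝ}

theorem abs_sum_mul_le (y : Y) {M : ℝ} (hM : 0 ≤ M) (ha : ∀ i, |a i| ≤ M) :
    |∑ i, a i * ρ i y| ≤ M :=
  calc |∑ i, a i * ρ i y| ≤ ∑ i, M * ρ i y :=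
        (Finset.abs_sum_le_sum_abs _ _).trans <| Finset.sum_le_sum fun i _ => by
          rw [abs_mul, abs_of_nonneg (ρ.nonneg i y)]
          exact mul_le_mul_of_nonneg_right (ha i) (ρ.nonneg i y)
    _ = M * ∑ᶠ i, ρ i y := by rw [finsum_eq_sum_of_fintype, Finset.mul_sum]
    _ ≤ M := mul_le_of_le_one_right hM (ρ.sum_le_one y)

theorem abs_sub_sum_mul_le {y : Y} (hy : y ∈ s) {b e : ℝ} (H : ∀ i, ρ i y ≠ 0 → |a i - b| ≤ e) :
    |∑ i, a i * ρ i y - b| ≤ e := by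
  have := ρ.finsum_smul_mem_convex (g := fun i _ => a i) hy
    (fun i hi => Metric.mem_closedBall.2 (H i hi)) (convex_closedBall b e)
  simpa [finsum_eq_sum_of_fintype, mul_comm, Real.dist_eq] using this

end PartitionOfUnity

theorem exists_finset_sum_mul_approx {X Y : Type*} [MetricSpace Y] {h : X × Y → ℝ} {M : ℝ}
    (hM : ∀ z, |h z| ≤ M) {K : Set Y} (hK : IsCompact K) {r : ℝ} (hr : 0 < r) :
    ∃ (t : Finset Y) (φ : t → Y →ᵇ ℝ), ∀ x y,
      |h (x, y) - ∑ c : t, h (x, c) * φ c y| ≤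
        continuityModulus h K r x + Kᶜ.indicator (fun _ => 2 * M) y := by
  obtain ⟨t, htK, hcover⟩ :=
    hK.elim_nhds_subcover (fun c => Metric.ball c r) fun c _ => Metric.ball_mem_nhds c hr
  obtain ⟨ρ, hρ⟩ := PartitionOfUnity.exists_isSubordinate hK.isClosed
    (fun c : t => Metric.ball (c : Y) r) (fun _ => Metric.isOpen_ball)
    (by simpa only [iUnion_subtype] using hcover)
  have hρ01 : ∀ c y, ρ c y ∈ Icc (0 : ℝ) 1 := fun c y => ⟨ρ.nonneg c y, ρ.le_one c y⟩
  refine ⟨t, fun c => .mkOfBound (ρ c) 1 fun y y' => Real.dist_le_of_mem_Icc_01 (hρ01 c y)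
    (hρ01 c y'), fun x y => ?_⟩
  simp only [BoundedContinuousFunction.mkOfBound_coe]
  by_cases hy : y ∈ K
  · rw [indicator_of_notMem (not_not_intro hy), add_zero, abs_sub_comm]
    exact ρ.abs_sub_sum_mul_le hy fun c hc => abs_sub_le_continuityModulus hM (htK c c.2) hy
      (Metric.mem_ball'.1 (hρ c (subset_tsupport _ hc)))
  · have hM0 : 0 ≤ M := (abs_nonneg _).trans (hM (x, y))
    have hmod : 0 ≤ continuityModulus h K r x := continuityModulus_nonneg
    rw [indicator_of_mem (mem_compl hy)]
    linarith [abs_sub (h (x, y)) (∑ c : t, h (x, c) * ρ c y), hM (x, y),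
      ρ.abs_sum_mul_le y hM0 fun c => hM (x, c)]

theorem isTightMeasureSet_of_tendsto {Y : Type*} [TopologicalSpace Y] [PolishSpace Y]
    [MeasurableSpace Y] [BorelSpace Y] {ρ : ℕ → ProbabilityMeasure Y}
    {ρlim : ProbabilityMeasure Y} (hρ : Tendsto ρ atTop (𝓝 ρlim)) :
    IsTightMeasureSet {θ : Measure Y | ∃ ρ' ∈ insert ρlim (range ρ), (ρ' : Measure Y) = θ} := by
  let := TopologicalSpace.upgradeIsCompletelyMetrizable Y
  exact isTightMeasureSet_of_isCompact_closure hρ.isCompact_insert_range.closure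

theorem exists_isCompact_measure_snd_preimage_compl_le {X Y : Type*} [TopologicalSpace X]
    [MeasurableSpace X] [OpensMeasurableSpace X] [TopologicalSpace Y] [PolishSpace Y]
    [MeasurableSpace Y] [BorelSpace Y] {μ : ℕ → Measure (X × Y)} {μlim : Measure (X × Y)}
    [∀ n, IsProbabilityMeasure (μ n)] [IsProbabilityMeasure μlim]
    (hweak : ∀ g : (X × Y) →ᵇ ℝ, Tendsto (fun n => ∫ z, g z ∂μ n) atTop (𝓝 (∫ z, g z ∂μlim)))
    {δ : ℝ≥0∞} (hδ : 0 < δ) :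
    ∃ K, IsCompact K ∧ ∀ θ ∈ insert μlim (range μ), θ (Prod.snd ⁻¹' Kᶜ) ≤ δ := by
  let P : ℕ → ProbabilityMeasure (X × Y) := fun n => ⟨μ n, inferInstance⟩
  let Plim : ProbabilityMeasure (X × Y) := ⟨μlim, inferInstance⟩
  have hP : Tendsto P atTop (𝓝 Plim) :=
    ProbabilityMeasure.tendsto_iff_forall_integral_tendsto.2 hweak
  obtain ⟨K, hK, hKδ⟩ := isTightMeasureSet_iff_exists_isCompact_measure_compl_le.1
    (isTightMeasureSet_of_tendsto
      (((ProbabilityMeasure.continuous_map continuous_snd).tendsto Plim).comp hP)) δ hδ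
  have hsnd : ∀ θ : ProbabilityMeasure (X × Y),
      (θ.map measurable_snd.aemeasurable : Measure Y) Kᶜ =
        (θ : Measure (X × Y)) (Prod.snd ⁻¹' Kᶜ) :=
    fun θ => by
      rw [ProbabilityMeasure.toMeasure_map, Measure.map_apply measurable_snd
        hK.isClosed.measurableSet.compl]
  refine ⟨K, hK, ?_⟩
  rintro θ (rfl | ⟨n, rfl⟩)
  · exact (hsnd Plim).symm.trans_le (hKδ _ ⟨_, mem_insert _ _, rfl⟩)
  · exact (hsnd (P n)).symm.trans_le (hKδ _ ⟨_, mem_insert_of_mem _ ⟨n, rfl⟩, rfl⟩)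

theorem tendsto_integral_of_abs_le_of_caratheodory {X Y : Type*} [TopologicalSpace X]
    [PolishSpace X] [MeasurableSpace X] [BorelSpace X] [TopologicalSpace Y] [PolishSpace Y]
    [MeasurableSpace Y] [BorelSpace Y] {ν : Measure X} [IsFiniteMeasure ν] {h : X × Y → ℝ}
    (hmeas : ∀ y, Measurable fun x => h (x, y)) (hcont : ∀ x, Continuous fun y => h (x, y))
    {M : ℝ} (hM0 : 0 ≤ M) (hM : ∀ z, |h z| ≤ M)
    {μ : ℕ → Measure (X × Y)} {μlim : Measure (X × Y)} [∀ n, IsProbabilityMeasure (μ n)]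
    [IsProbabilityMeasure μlim]
    (hmarg : ∀ n, (μ n).map Prod.fst = ν) (hmarglim : μlim.map Prod.fst = ν)
    (hweak : ∀ g : (X × Y) →ᵇ ℝ, Tendsto (fun n => ∫ z, g z ∂μ n) atTop (𝓝 (∫ z, g z ∂μlim))) :
    Tendsto (fun n => ∫ z, h z ∂μ n) atTop (𝓝 (∫ z, h z ∂μlim)) := by
  let := TopologicalSpace.upgradeIsCompletelyMetrizable Y
  have hh : Measurable h := measurable_prod_of_measurable_of_continuous hmeas hcont
  refine tendsto_of_forall_dist_le fun ε hε => ?_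
  set δ : ℝ := ε / (4 * M + 1)
  obtain ⟨K, hK, hKδ⟩ :=
    exists_isCompact_measure_snd_preimage_compl_le hweak (δ := .ofReal δ) (by positivity)
  obtain ⟨r, hrε, hr⟩ : ∃ r, ∫ x, continuityModulus h K r x ∂ν ≤ ε / 2 ∧ 0 < r :=
    (((tendsto_integral_continuityModulus hM0 hM hK hmeas hcont).eventually
      (ge_mem_nhds (half_pos hε))).and self_mem_nhdsWithin).exists
  obtain ⟨t, φ, happrox⟩ := exists_finset_sum_mul_approx hM hK hr
  have hslice : ∀ c : t, Integrable (fun x => h (x, c)) ν := fun c =>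
    .of_bound (hmeas c).aestronglyMeasurable M (ae_of_all _ fun x => hM (x, c))
  have hδM : δ * (2 * M) ≤ ε / 2 := by
    rw [div_mul_eq_mul_div, div_le_div_iff₀ (by positivity) two_pos]
    nlinarith
  have key : ∀ θ : Measure (X × Y), [IsFiniteMeasure θ] → θ.map Prod.fst = ν →
      θ (Prod.snd ⁻¹' Kᶜ) ≤ .ofReal δ →
      dist (∫ z, h z ∂θ) (∫ z, ∑ c : t, h (z.1, c) * φ c z.2 ∂θ) ≤ ε := fun θ _ hθ hθK =>
    calc _ ≤ ∫ x, continuityModulus h K r x ∂ν + θ.real (Prod.snd ⁻¹' Kᶜ) * (2 * M) :=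
          abs_integral_sub_le_of_map_fst_eq hθ
            (.of_bound hh.aestronglyMeasurable M (ae_of_all _ hM))
            (integrable_finsetSum _ fun c _ => (hslice c).comp_fst_mul_of_map_fst_eq hθ (φ c))
            (integrable_continuityModulus hM0 hM hmeas hcont) hK.isClosed.measurableSet.compl
            happrox
      _ ≤ ε / 2 + δ * (2 * M) := by
          gcongr
          exact ENNReal.toReal_le_of_le_ofReal (by positivity) hθK
      _ ≤ ε := by linarith
  exact ⟨_, _, tendsto_integral_sum_mul_of_map_fst_eq hmarg hmarglim hweak hslice φ,
    fun n => key (μ n) (hmarg n) (hKδ _ (mem_insert_of_mem _ ⟨n, rfl⟩)),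
    key μlim hmarglim (hKδ _ (mem_insert _ _))⟩

theorem abs_sub_max_min_le {a b M : ℝ} (hab : |a| ≤ b) :
    |a - max (-M) (min a M)| ≤ max (b - M) 0 := by
  rw [abs_le] at hab ⊢
  constructor <;> grind

theorem tendsto_integral_max_sub_atTop {X : Type*} [MeasurableSpace X] {ν : Measure X}
    {f : X → ℝ} (hf : Integrable f ν) :
    Tendsto (fun M : ℝ => ∫ x, max (f x - M) 0 ∂ν) atTop (𝓝 0) := by
  simpa using tendsto_integral_filter_of_dominated_convergence (F := fun M x => max (f x - M) 0)
    (f := fun _ => 0) (fun x => |f x|)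
    (Eventually.of_forall fun M =>
      (continuous_id.sub continuous_const |>.max continuous_const).comp_aestronglyMeasurable
        (g := fun v => max (v - M) 0) hf.1)
    ((eventually_ge_atTop 0).mono fun M hM => ae_of_all _ fun x => by
      rw [Real.norm_eq_abs, abs_of_nonneg (le_max_right _ _)]
      exact max_le (by linarith [le_abs_self (f x)]) (abs_nonneg _))
    hf.abs
    (ae_of_all _ fun x => tendsto_const_nhds.congr' <|
      (eventually_ge_atTop (f x)).mono fun M hM => (max_eq_right (by linarith)).symm)

theorem stmt11_general {X Y : Type*} [TopologicalSpace X] [PolishSpace X]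
    [MeasurableSpace X] [BorelSpace X]
    [TopologicalSpace Y] [PolishSpace Y] [MeasurableSpace Y] [BorelSpace Y]
    (ν : Measure X) [IsProbabilityMeasure ν]
    (h : X × Y → ℝ)
    (hmeas : ∀ y, Measurable fun x => h (x, y))
    (hcont : ∀ x, Continuous fun y => h (x, y))
    (f : X → ℝ) (hfint : Integrable f ν)
    (hbound : ∀ x y, |h (x, y)| ≤ f x)
    (μ : ℕ → Measure (X × Y)) (μlim : Measure (X × Y))
    [∀ n, IsProbabilityMeasure (μ n)] [IsProbabilityMeasure μlim]
    (hmarg : ∀ n, (μ n).map Prod.fst = ν) (hmarglim : μlim.map Prod.fst = ν)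
    (hweak : ∀ g : BoundedContinuousFunction (X × Y) ℝ,
      Tendsto (fun n => ∫ z, g z ∂(μ n)) atTop (nhds (∫ z, g z ∂μlim))) :
    Tendsto (fun n => ∫ z, h z ∂(μ n)) atTop (nhds (∫ z, h z ∂μlim)) := by
  have hh : Measurable h := measurable_prod_of_measurable_of_continuous hmeas hcont
  refine tendsto_of_forall_dist_le fun ε hε => ?_
  obtain ⟨M, hMε, hM0⟩ := (((tendsto_integral_max_sub_atTop hfint).eventually
    (ge_mem_nhds hε)).and (eventually_ge_atTop 0)).exists
  set trunc : X × Y → ℝ := fun z => max (-M) (min (h z) M)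
  have htrunc : ∀ z, |trunc z| ≤ M := fun z =>
    abs_le.2 ⟨le_max_left _ _, max_le (by linarith) (min_le_right _ _)⟩
  have hconv := tendsto_integral_of_abs_le_of_caratheodory (h := trunc)
    (fun y => measurable_const.max ((hmeas y).min measurable_const))
    (fun x => continuous_const.max ((hcont x).min continuous_const)) hM0 htrunc
    hmarg hmarglim hweak
  have hexcess : Integrable (fun x => max (f x - M) 0) ν :=
    (hfint.sub (integrable_const M)).sup (integrable_zero _ _ _)
  have key : ∀ θ : Measure (X × Y), [IsFiniteMeasure θ] → θ.map Prod.fst = ν →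
      dist (∫ z, h z ∂θ) (∫ z, trunc z ∂θ) ≤ ε := fun θ _ hθ =>
    calc dist _ _ ≤ ∫ z, max (f z.1 - M) 0 ∂θ :=
          abs_integral_sub_le_integral
            ((hfint.comp_fst_of_map_fst_eq hθ).mono' hh.aestronglyMeasurable
              (ae_of_all _ fun z => hbound z.1 z.2))
            (.of_bound (measurable_const.max (hh.min measurable_const)).aestronglyMeasurable M
              (ae_of_all _ htrunc))
            (hexcess.comp_fst_of_map_fst_eq hθ) fun z => abs_sub_max_min_le (hbound z.1 z.2)
      _ = ∫ x, max (f x - M) 0 ∂ν := integral_comp_fst_of_map_fst_eq hθ hexcess.1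
      _ ≤ ε := hMε
  exact ⟨_, _, hconv, fun n => key _ (hmarg n), key _ hmarglim⟩

theorem stmt11 {X Y : Type*} [TopologicalSpace X] [PolishSpace X]
    [MeasurableSpace X] [BorelSpace X]
    [TopologicalSpace Y] [PolishSpace Y] [MeasurableSpace Y] [BorelSpace Y]
    (ν : Measure X) [IsProbabilityMeasure ν]
    (h : X × Y → ℝ)
    (hmeas : ∀ y, Measurable fun x => h (x, y))
    (hcont : ∀ x, Continuous fun y => h (x, y))
    (f : X → ℝ) (hf0 : ∀ x, 0 ≤ f x) (hfint : Integrable f ν)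
    (hbound : ∀ x y, |h (x, y)| ≤ f x)
    (μ : ℕ → Measure (X × Y)) (μlim : Measure (X × Y))
    [∀ n, IsProbabilityMeasure (μ n)] [IsProbabilityMeasure μlim]
    (hmarg : ∀ n, (μ n).map Prod.fst = ν) (hmarglim : μlim.map Prod.fst = ν)
    (hweak : ∀ g : BoundedContinuousFunction (X × Y) ℝ,
      Tendsto (fun n => ∫ z, g z ∂(μ n)) atTop (nhds (∫ z, g z ∂μlim))) :
    Tendsto (fun n => ∫ z, h z ∂(μ n)) atTop (nhds (∫ z, h z ∂μlim)) :=
  stmt11_general ν h hmeas hcont f hfint hbound μ μlim hmarg hmarglim hweak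
end

section
/- In the two-stage game where Ann chooses a_1 ∈ [0,1] while Bob simultaneously chooses b ∈ {0,1}, Ann then observes a_1·b and chooses a_2 ∈ {0,1}, with Ann's payoff u_A = −a_1 − |a_2 − b| and Bob's payoff u_B = |a_2 − b|, no Nash equilibrium exists. Specifically: (i) in any Nash equilibrium Ann plays a_1 = 0 with probability 1; (ii) if Ann plays a_1 = 0 with probability 1, Bob has a strategy (uniform randomization) guaranteeing expected payoff 1/2, so Ann's equilibrium payoff would be at most −1/2; (iii) Ann has a strategy (choose a_1 = 1/4, then set a_2 equal to b, which she can infer from observing a_1·b since a_1 > 0) with payoff −1/4 > −1/2 against any strategy of Bob; hence no strategy profile is a Nash equilibrium. -/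
open MeasureTheory

/-- Ann's expected payoff: Ann mixes over `a₁` via `σ1` (supported on `[0,1]`),
Bob plays `b = 1` with probability `p`, and Ann's second-period behavioral strategy
`α2 a₁ o` is the probability of `a₂ = 1` after observing `o = a₁ * b`.
Her payoff is `-a₁ - |a₂ - b|`. -/
noncomputable def UA (σ1 : Measure ℝ) (p : ℝ) (α2 : ℝ → ℝ → ℝ) : ℝ :=
  ∫ a, (p * (-a - (1 - α2 a a)) + (1 - p) * (-a - α2 a 0)) ∂σ1

/-- Bob's expected payoff `|a₂ - b|`. -/
noncomputable def UB (σ1 : Measure ℝ) (p : ℝ) (α2 : ℝ → ℝ → ℝ) : ℝ :=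
  ∫ a, (p * (1 - α2 a a) + (1 - p) * α2 a 0) ∂σ1

/-- Admissibility of Ann's strategy: `σ1` is a probability measure on `[0,1]`
and `α2` is a measurable family of mixtures over `{0,1}`. -/
def ValidAnn (σ1 : Measure ℝ) (α2 : ℝ → ℝ → ℝ) : Prop :=
  IsProbabilityMeasure σ1 ∧ σ1 (Set.Icc (0:ℝ) 1)ᶜ = 0 ∧
    Measurable (Function.uncurry α2) ∧ ∀ x y, α2 x y ∈ Set.Icc (0:ℝ) 1

/-- Nash equilibrium: neither Ann (controlling `σ1` and `α2`) nor Bob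
(controlling `p`) can strictly improve by a unilateral deviation. -/
def IsNashEq (σ1 : Measure ℝ) (p : ℝ) (α2 : ℝ → ℝ → ℝ) : Prop :=
  ValidAnn σ1 α2 ∧ p ∈ Set.Icc (0:ℝ) 1 ∧
    (∀ σ1' α2', ValidAnn σ1' α2' → UA σ1' p α2' ≤ UA σ1 p α2) ∧
    (∀ p' ∈ Set.Icc (0:ℝ) 1, UB σ1 p' α2 ≤ UB σ1 p α2)

-- match strategy
noncomputable def matchStrat : ℝ → ℝ → ℝ := fun _ o => if o = 0 then 0 else 1

lemma matchStrat_valid {c : ℝ} (hc : c ∈ Set.Icc (0:ℝ) 1) :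
    ValidAnn (Measure.dirac c) matchStrat := by
  refine ⟨by infer_instance, ?_, ?_, ?_⟩
  · rw [Measure.dirac_apply' _ (measurableSet_Icc.compl)]
    simp [hc]
  · have : Function.uncurry matchStrat =
        fun q : ℝ × ℝ => if q.2 = 0 then (0:ℝ) else 1 := rfl
    rw [this]
    exact Measurable.ite (measurable_snd (measurableSet_singleton 0))
      measurable_const measurable_const
  · intro x y
    unfold matchStrat
    split <;> norm_num

lemma UA_dirac_match {c : ℝ} (hc : c ≠ 0) (p : ℝ) :
    UA (Measure.dirac c) p matchStrat = -c := by
  unfold UA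
  rw [integral_dirac]
  simp [matchStrat, hc]
  ring

-- a.e. membership in [0,1]
lemma ae_mem_Icc {σ1 : Measure ℝ} (h : σ1 (Set.Icc (0:ℝ) 1)ᶜ = 0) :
    ∀ᵐ a ∂σ1, a ∈ Set.Icc (0:ℝ) 1 := by
  rw [MeasureTheory.ae_iff]
  convert h using 2
  rfl

-- In a Nash equilibrium, UA = 0
lemma ua_eq_zero {σ1 p α2} (h : IsNashEq σ1 p α2) : UA σ1 p α2 = 0 := by
  obtain ⟨⟨hprob, hsupp, hmeas, hrange⟩, hp, hAnn, hBob⟩ := h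
  have hle : UA σ1 p α2 ≤ 0 := by
    refine integral_nonpos_of_ae ?_
    filter_upwards [ae_mem_Icc hsupp] with a ha
    have h1 := (hrange a a).1
    have h2 := (hrange a a).2
    have h3 := (hrange a 0).1
    have h4 := (hrange a 0).2
    have hp0 := hp.1
    have hp1 := hp.2
    have ha0 := ha.1
    simp only [Pi.zero_apply]
    nlinarith [mul_nonneg hp0 (sub_nonneg.mpr h2), mul_nonneg (sub_nonneg.mpr hp1) h3,
      mul_nonneg hp0 ha0, mul_nonneg (sub_nonneg.mpr hp1) ha0]
  have hge : ∀ ε ∈ Set.Ioc (0:ℝ) 1, -ε ≤ UA σ1 p α2 := by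
    intro ε hε
    have hv := matchStrat_valid (Set.mem_Icc.mpr ⟨le_of_lt hε.1, hε.2⟩)
    have := hAnn (Measure.dirac ε) matchStrat hv
    rwa [UA_dirac_match (ne_of_gt hε.1)] at this
  have : 0 ≤ UA σ1 p α2 := by
    by_contra hcon
    push_neg at hcon
    set U := UA σ1 p α2
    rcases le_total (-U/2) 1 with hle1 | hle1
    · have := hge (-U/2) ⟨by linarith, hle1⟩
      linarith
    · have := hge 1 ⟨one_pos, le_refl 1⟩
      linarith
  linarith

-- In a Nash equilibrium, σ1 {0} = 1
lemma sigma_zero {σ1 p α2} (h : IsNashEq σ1 p α2) : σ1 {0} = 1 := by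
  have hU := ua_eq_zero h
  obtain ⟨⟨hprob, hsupp, hmeas, hrange⟩, hp, hAnn, hBob⟩ := h
  set f : ℝ → ℝ := fun a => p * (-a - (1 - α2 a a)) + (1 - p) * (-a - α2 a 0) with hf
  have hfmeas : Measurable f := by
    have h1 : Measurable (fun a : ℝ => α2 a a) :=
      hmeas.comp (measurable_id.prodMk measurable_id)
    have h2 : Measurable (fun a : ℝ => α2 a 0) :=
      hmeas.comp (measurable_id.prodMk measurable_const)
    fun_prop
  have hbd : ∀ᵐ a ∂σ1, ‖f a‖ ≤ 3 := by
    filter_upwards [ae_mem_Icc hsupp] with a ha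
    have h1 := (hrange a a).1
    have h2 := (hrange a a).2
    have h3 := (hrange a 0).1
    have h4 := (hrange a 0).2
    rw [Real.norm_eq_abs, abs_le]
    simp only [hf]
    constructor <;> nlinarith [mul_nonneg hp.1 ha.1, mul_nonneg (sub_nonneg.mpr hp.2) ha.1, mul_nonneg hp.1 (sub_nonneg.mpr h2), mul_nonneg (sub_nonneg.mpr hp.2) h3, mul_nonneg hp.1 h1, mul_nonneg (sub_nonneg.mpr hp.2) (sub_nonneg.mpr h4), mul_nonneg hp.1 (sub_nonneg.mpr ha.2), mul_nonneg (sub_nonneg.mpr hp.2) (sub_nonneg.mpr ha.2)]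
  have hint : Integrable f σ1 :=
    Integrable.mono' (integrable_const 3) hfmeas.aestronglyMeasurable hbd
  have hnonneg : 0 ≤ᵐ[σ1] (fun a => -f a) := by
    filter_upwards [ae_mem_Icc hsupp] with a ha
    have h1 := (hrange a a).1
    have h2 := (hrange a a).2
    have h3 := (hrange a 0).1
    have h4 := (hrange a 0).2
    simp only [hf, Pi.zero_apply]
    nlinarith [mul_nonneg hp.1 (sub_nonneg.mpr h2), mul_nonneg (sub_nonneg.mpr hp.2) h3,
      mul_nonneg hp.1 ha.1, mul_nonneg (sub_nonneg.mpr hp.2) ha.1]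
  have hzero : ∫ a, -f a ∂σ1 = 0 := by
    rw [integral_neg]
    simp only [neg_eq_zero]
    exact hU
  have haezero : (fun a => -f a) =ᵐ[σ1] 0 :=
    (integral_eq_zero_iff_of_nonneg_ae hnonneg hint.neg).mp hzero
  have haezero' : ∀ᵐ a ∂σ1, a = 0 := by
    filter_upwards [haezero, ae_mem_Icc hsupp] with a hfa ha
    have h1 := (hrange a a).1
    have h2 := (hrange a a).2
    have h3 := (hrange a 0).1
    have h4 := (hrange a 0).2
    simp only [hf, Pi.zero_apply] at hfa
    have hub : a ≤ 0 := by
      nlinarith [mul_nonneg hp.1 (sub_nonneg.mpr h2), mul_nonneg (sub_nonneg.mpr hp.2) h3]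
    exact le_antisymm hub ha.1
  have hcompl : σ1 {(0:ℝ)}ᶜ = 0 := by
    rw [MeasureTheory.ae_iff] at haezero'
    convert haezero' using 2
    rfl
  have := measure_add_measure_compl (μ := σ1) (measurableSet_singleton (0:ℝ))
  rw [hcompl, add_zero, hprob.measure_univ] at this
  exact this

lemma ae_zero_of_sigma {σ1 : Measure ℝ} [IsProbabilityMeasure σ1]
    (h : σ1 {0} = 1) : ∀ᵐ a ∂σ1, a = 0 := by
  have hc : σ1 {(0:ℝ)}ᶜ = 0 := by
    rw [measure_compl (measurableSet_singleton 0) (measure_ne_top σ1 _), h,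
      measure_univ, tsub_self]
  rw [MeasureTheory.ae_iff]
  convert hc using 2
  rfl

lemma UB_const {σ1 : Measure ℝ} {p : ℝ} {α2 : ℝ → ℝ → ℝ} [IsProbabilityMeasure σ1]
    (h : ∀ᵐ a ∂σ1, a = 0) :
    UB σ1 p α2 = p * (1 - α2 0 0) + (1 - p) * α2 0 0 := by
  unfold UB
  rw [integral_congr_ae (g := fun _ => p * (1 - α2 0 0) + (1 - p) * α2 0 0)]
  · simp
  · filter_upwards [h] with a ha
    rw [ha]

lemma UA_const {σ1 : Measure ℝ} {p : ℝ} {α2 : ℝ → ℝ → ℝ} [IsProbabilityMeasure σ1]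
    (h : ∀ᵐ a ∂σ1, a = 0) :
    UA σ1 p α2 = -(p * (1 - α2 0 0) + (1 - p) * α2 0 0) := by
  unfold UA
  rw [integral_congr_ae (g := fun _ => -(p * (1 - α2 0 0) + (1 - p) * α2 0 0))]
  · simp
  · filter_upwards [h] with a ha
    rw [ha]; ring

lemma part2 (σ1 : Measure ℝ) (α2 : ℝ → ℝ → ℝ) (hv : ValidAnn σ1 α2)
    (h : σ1 {0} = 1) : 1 / 2 ≤ UB σ1 (1 / 2) α2 := by
  have := hv.1
  rw [UB_const (ae_zero_of_sigma h)]
  ring_nf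
  linarith

lemma part3 {σ1 p α2} (h : IsNashEq σ1 p α2) (h0 : σ1 {0} = 1) :
    UA σ1 p α2 ≤ -(1 / 2) := by
  obtain ⟨⟨hprob, hsupp, hmeas, hrange⟩, hp, hAnn, hBob⟩ := h
  have hae := ae_zero_of_sigma h0
  have hB := hBob (1/2) (by norm_num)
  rw [UB_const hae, UB_const hae] at hB
  rw [UA_const hae]
  linarith

theorem stmt15 :
    -- (i) in any Nash equilibrium Ann plays a₁ = 0 with probability 1
    (∀ σ1 p α2, IsNashEq σ1 p α2 → σ1 {0} = 1) ∧
    -- (ii) if Ann plays a₁ = 0 surely, uniform randomization guarantees Bob 1/2 ...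
    (∀ σ1 α2, ValidAnn σ1 α2 → σ1 {0} = 1 → 1 / 2 ≤ UB σ1 (1 / 2) α2) ∧
    (∀ σ1 p α2, IsNashEq σ1 p α2 → σ1 {0} = 1 → UA σ1 p α2 ≤ -(1 / 2)) ∧
    -- (iii) Ann has a strategy with payoff -1/4 against any strategy of Bob
    (∃ σ1 α2, ValidAnn σ1 α2 ∧ ∀ p ∈ Set.Icc (0:ℝ) 1, UA σ1 p α2 = -(1 / 4)) ∧
    -- hence no Nash equilibrium exists
    ¬ ∃ σ1 p α2, IsNashEq σ1 p α2 := by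
  refine ⟨fun σ1 p α2 h => sigma_zero h, part2, fun σ1 p α2 h h0 => part3 h h0, ?_, ?_⟩
  · refine ⟨Measure.dirac (1/4), matchStrat,
      matchStrat_valid (by norm_num), fun p _ => ?_⟩
    rw [UA_dirac_match (by norm_num : (1/4:ℝ) ≠ 0)]
  · rintro ⟨σ1, p, α2, h⟩
    have h1 := ua_eq_zero h
    have h2 := part3 h (sigma_zero h)
    linarith
end

section
/- In the signaling game where nature chooses t ∈ {−1,1} uniformly, Ann observes t and chooses a ∈ [−1,1], Bob observes a and chooses b ∈ {−1,1}, with payoffs u_A(t,a,b) = −|t − b + a| and u_B(t,a,b) = a·b, there is no Nash equilibrium in which Bob best-responds after every action a (sequential rationality off path): for a ≠ 0 Bob's unique best response is b = sign(a); given this, each type t of Ann can obtain payoff strictly greater than −ε for every ε > 0 but only by actions arbitrarily close to 0, and the supremum payoff 0 is unattainable for both types simultaneously when Bob's response to a = 0 is independent of t; hence no sequentially rational equilibrium exists. -/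
open MeasureTheory

/-- Expected payoff of Ann's type `t` from action `a` when Bob plays `b = 1` with
probability `β a`; Ann's payoff is `-|t - b + a|`. -/
noncomputable def WA (t a : ℝ) (β : ℝ → ℝ) : ℝ :=
  β a * (-(|t - 1 + a|)) + (1 - β a) * (-(|t + 1 + a|))

/-- Sequential rationality of Bob's (mixed) response `β`: after every action,
including off-path ones, Bob best-responds, i.e. `b = 1` if `a > 0` and
`b = -1` if `a < 0`. -/
def SeqRat (β : ℝ → ℝ) : Prop :=
  (∀ a, β a ∈ Set.Icc (0:ℝ) 1) ∧ (∀ a, 0 < a → β a = 1) ∧ (∀ a, a < 0 → β a = 0)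

/-!
Against a sequentially rational Bob, type `1` gets `-a` from any `a > 0` and type `-1` gets `a`
from any `a < 0`, so each type's supremum payoff is `0`. A payoff of exactly `0` is only reached
at `a = 0` and only if Bob answers `0` with the type's own sign for sure, which would require
`β 0 = 1` for type `1` and `β 0 = 0` for type `-1` at once.
-/

lemma WA_nonpos (t a : ℝ) {β : ℝ → ℝ} (hβ : β a ∈ Set.Icc (0:ℝ) 1) : WA t a β ≤ 0 := by
  obtain ⟨h0, h1⟩ := hβ
  have := abs_nonneg (t - 1 + a)
  have := abs_nonneg (t + 1 + a)
  unfold WA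
  nlinarith

lemma eq_zero_of_WA_eq_zero {t a : ℝ} {β : ℝ → ℝ} (ht : t ∈ ({-1, 1} : Set ℝ))
    (ha : a ∈ Set.Icc (-1:ℝ) 1) (hβ : β a ∈ Set.Icc (0:ℝ) 1) (hW : WA t a β = 0) :
    a = 0 ∧ β 0 = (t + 1) / 2 := by
  obtain ⟨h0, h1⟩ := hβ
  obtain ⟨ha₁, ha₂⟩ := ha
  have habs := abs_nonneg a
  unfold WA at hW
  suffices a = 0 ∧ β a = (t + 1) / 2 by obtain ⟨rfl, h⟩ := this; exact ⟨rfl, h⟩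
  rcases ht with rfl | rfl
  · rw [show (-1:ℝ) + 1 + a = a by ring, abs_of_nonpos (by linarith : (-1:ℝ) - 1 + a ≤ 0)] at hW
    have hβa : β a = 0 := by nlinarith
    rw [hβa] at hW ⊢
    exact ⟨abs_eq_zero.mp (by linarith), by norm_num⟩
  · rw [show (1:ℝ) - 1 + a = a by ring, abs_of_nonneg (by linarith : 0 ≤ (1:ℝ) + 1 + a)] at hW
    have hβa : β a = 1 := by nlinarith
    rw [hβa] at hW ⊢
    exact ⟨abs_eq_zero.mp (by linarith), by norm_num⟩

namespace SeqRat

variable {β : ℝ → ℝ}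

lemma WA_one_of_pos (hβ : SeqRat β) {a : ℝ} (ha : 0 < a) : WA 1 a β = -a := by
  rw [WA, hβ.2.1 a ha, show (1:ℝ) - 1 + a = a by ring, abs_of_pos ha]
  ring

lemma WA_neg_one_of_neg (hβ : SeqRat β) {a : ℝ} (ha : a < 0) : WA (-1) a β = a := by
  rw [WA, hβ.2.2 a ha, show (-1:ℝ) + 1 + a = a by ring, abs_of_neg ha]
  ring

lemma exists_WA_gt (hβ : SeqRat β) {t : ℝ} (ht : t ∈ ({-1, 1} : Set ℝ)) {ε : ℝ} (hε : 0 < ε) :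
    ∃ a ∈ Set.Icc (-1:ℝ) 1, -ε < WA t a β := by
  obtain ⟨δ, hδ, hδε, hδ₁⟩ : ∃ δ, 0 < δ ∧ δ < ε ∧ δ < 1 := by
    obtain ⟨δ, hδ, hδm⟩ := exists_between (lt_min hε one_pos)
    exact ⟨δ, hδ, lt_min_iff.mp hδm⟩
  rcases ht with rfl | rfl
  · exact ⟨-δ, ⟨by linarith, by linarith⟩, by rw [hβ.WA_neg_one_of_neg (by linarith)]; linarith⟩
  · exact ⟨δ, ⟨by linarith, hδ₁.le⟩, by rw [hβ.WA_one_of_pos hδ]; linarith⟩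

lemma WA_eq_zero_of_isMaxOn (hβ : SeqRat β) {t a : ℝ} (ht : t ∈ ({-1, 1} : Set ℝ))
    (hmax : IsMaxOn (fun a' ↦ WA t a' β) (Set.Icc (-1) 1) a) : WA t a β = 0 := by
  refine le_antisymm (WA_nonpos t a (hβ.1 a)) (le_of_forall_pos_lt_add fun ε hε ↦ ?_)
  obtain ⟨a', ha', hlt⟩ := hβ.exists_WA_gt ht hε
  linarith [isMaxOn_iff.mp hmax a' ha']

lemma eq_zero_of_isMaxOn (hβ : SeqRat β) {t a : ℝ} (ht : t ∈ ({-1, 1} : Set ℝ))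
    (ha : a ∈ Set.Icc (-1:ℝ) 1) (hmax : IsMaxOn (fun a' ↦ WA t a' β) (Set.Icc (-1) 1) a) :
    a = 0 ∧ β 0 = (t + 1) / 2 :=
  eq_zero_of_WA_eq_zero ht ha (hβ.1 a) (hβ.WA_eq_zero_of_isMaxOn ht hmax)

end SeqRat

theorem stmt16 :
    -- each type of Ann can secure more than -ε against a sequentially rational Bob
    (∀ β : ℝ → ℝ, SeqRat β → ∀ t ∈ ({-1, 1} : Set ℝ), ∀ ε > (0:ℝ),
      ∃ a ∈ Set.Icc (-1:ℝ) 1, -ε < WA t a β) ∧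
    -- but no sequentially rational equilibrium exists
    ¬ ∃ (σ : ℝ → Measure ℝ) (β : ℝ → ℝ), SeqRat β ∧
        ∀ t ∈ ({-1, 1} : Set ℝ),
          IsProbabilityMeasure (σ t) ∧ σ t (Set.Icc (-1:ℝ) 1)ᶜ = 0 ∧
          ∀ᵐ a ∂(σ t), a ∈ Set.Icc (-1:ℝ) 1 ∧
            ∀ a' ∈ Set.Icc (-1:ℝ) 1, WA t a' β ≤ WA t a β := by
  refine ⟨fun β hβ t ht ε hε ↦ hβ.exists_WA_gt ht hε, ?_⟩
  rintro ⟨σ, β, hβ, hσ⟩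
  have response_at_zero : ∀ t ∈ ({-1, 1} : Set ℝ), β 0 = (t + 1) / 2 := by
    intro t ht
    obtain ⟨hprob, -, hbest⟩ := hσ t ht
    obtain ⟨a, ha, hmax⟩ := hbest.exists
    exact (hβ.eq_zero_of_isMaxOn ht ha (isMaxOn_iff.mpr hmax)).2
  have h₁ := response_at_zero 1 (by simp)
  have hneg := response_at_zero (-1) (by simp)
  norm_num [h₁] at hneg
end
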